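/- Every digraph D with at most two lonely arcs is BE-diperfect. In particular every symmetric digraph (no lonely arcs) is BE-diperfect, and hence α-diperfect. -/

import Mathlib

open Relation

variable {V : Type*}

/-- `u` and `v` are adjacent in the digraph with arc relation `A`. -/
def DAdj (A : V → V → Prop) (u v : V) : Prop := A u v ∨ A v u

/-- `v` is a source: no arc enters `v`. -/
def IsSource (A : V → V → Prop) (v : V) : Prop := ∀ u, ¬ A u v

/-- `v` is a sink: no arc leaves `v`. -/
def IsSink (A : V → V → Prop) (v : V) : Prop := ∀ u, ¬ A v u

/-- A stable (independent) set of the digraph. -/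
def IsStable (A : V → V → Prop) (S : Set V) : Prop :=
  ∀ u ∈ S, ∀ v ∈ S, u ≠ v → ¬ DAdj A u v

/-- The stability number. -/
noncomputable def alphaNum (A : V → V → Prop) : ℕ :=
  sSup {n | ∃ S : Set V, IsStable A S ∧ S.ncard = n}

/-- A maximum stable set. -/
def IsMaxStable (A : V → V → Prop) (S : Set V) : Prop :=
  IsStable A S ∧ ∀ T : Set V, IsStable A T → T.ncard ≤ S.ncard

/-- A (nonempty) directed path, given as its list of vertices. -/
def IsDiPath (A : V → V → Prop) (l : List V) : Prop :=
  l ≠ [] ∧ l.Nodup ∧ l.Chain' A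

/-- A path partition of the digraph: every vertex lies on exactly one of the paths. -/
def IsPathPartition (A : V → V → Prop) (P : Set (List V)) : Prop :=
  (∀ l ∈ P, IsDiPath A l) ∧ ∀ v : V, ∃! l, l ∈ P ∧ v ∈ l

/-- An `S`-path partition: each path contains exactly one vertex of `S`. -/
def IsSPartition (A : V → V → Prop) (S : Set V) (P : Set (List V)) : Prop :=
  IsPathPartition A P ∧ ∀ l ∈ P, ∃! s, s ∈ l ∧ s ∈ S

/-- An `S`-BE-path partition: each path contains exactly one vertex of `S`,
which is moreover an endpoint of the path. -/
def IsBEPartition (A : V → V → Prop) (S : Set V) (P : Set (List V)) : Prop :=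
  IsSPartition A S P ∧
    ∀ l ∈ P, ∀ s ∈ l, s ∈ S → l.head? = some s ∨ l.getLast? = some s

/-- The α-property: every maximum stable set admits an `S`-path partition. -/
def AlphaProperty (A : V → V → Prop) : Prop :=
  ∀ S : Set V, IsMaxStable A S → ∃ P, IsSPartition A S P

/-- The BE-property: every maximum stable set admits an `S`-BE-path partition. -/
def BEProperty (A : V → V → Prop) : Prop :=
  ∀ S : Set V, IsMaxStable A S → ∃ P, IsBEPartition A S P

/-- α-diperfect: every induced subdigraph satisfies the α-property. -/
def AlphaDiperfect (A : V → V → Prop) : Prop :=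
  ∀ W : Set V, AlphaProperty (fun a b : W => A a.1 b.1)

/-- BE-diperfect: every induced subdigraph satisfies the BE-property. -/
def BEDiperfect (A : V → V → Prop) : Prop :=
  ∀ W : Set V, BEProperty (fun a b : W => A a.1 b.1)

/-- Mutual reachability. -/
def MutReach (A : V → V → Prop) (u v : V) : Prop :=
  ReflTransGen A u v ∧ ReflTransGen A v u

/-- Semicomplete digraph: any two distinct vertices are adjacent. -/
def Semicomplete (A : V → V → Prop) : Prop :=
  ∀ u v : V, u ≠ v → DAdj A u v

/-- Strongly connected digraph. -/
def Strong (A : V → V → Prop) : Prop :=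
  ∀ u v : V, ReflTransGen A u v

/-- The digraph has an induced transitive triangle. -/
def HasInducedTransitiveTriangle (A : V → V → Prop) : Prop :=
  ∃ a b c : V, a ≠ b ∧ a ≠ c ∧ b ≠ c ∧
    A a b ∧ A a c ∧ A c b ∧ ¬ A b a ∧ ¬ A c a ∧ ¬ A b c

/-- The digraph is a blocking odd cycle: its underlying graph is an odd cycle
`x_1 x_2 ⋯ x_{2k+1} x_1` (with `k ≥ 1`; here `x i` is `x_{i+1}`), and both `x_1`
and `x_2` are each a source or a sink. -/
def IsBlockingOddCycle (A : V → V → Prop) : Prop :=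
  ∃ (k : ℕ) (x : ZMod (2 * k + 1) → V), 1 ≤ k ∧ Function.Bijective x ∧
    (∀ i j, DAdj A (x i) (x j) ↔ (j = i + 1 ∨ i = j + 1)) ∧
    (IsSource A (x 0) ∨ IsSink A (x 0)) ∧
    (IsSource A (x 1) ∨ IsSink A (x 1))

/-- The digraph is an anti-directed odd cycle: its underlying graph is an odd cycle
`x_1 ⋯ x_{2k+1} x_1` with `k ≥ 2` (here `x m` is `x_{m+1}`), and each of
`x_1, x_2, x_3, x_4, x_6, x_8, …, x_{2k}` is a source or a sink. -/
def IsAntiDirectedOddCycle (A : V → V → Prop) : Prop :=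
  ∃ (k : ℕ) (x : ZMod (2 * k + 1) → V), 2 ≤ k ∧ Function.Bijective x ∧
    (∀ i j, DAdj A (x i) (x j) ↔ (j = i + 1 ∨ i = j + 1)) ∧
    ∀ m : ℕ, m ≤ 2 * k →
      (m ≤ 3 ∨ (5 ≤ m ∧ m ≤ 2 * k - 1 ∧ Odd m)) →
      (IsSource A (x (m : ZMod (2 * k + 1))) ∨ IsSink A (x (m : ZMod (2 * k + 1))))

/-- `v` is a universal vertex. -/
def IsUniversal (A : V → V → Prop) (v : V) : Prop := ∀ u, u ≠ v → DAdj A u v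

/-- The underlying simple graph of a digraph. -/
def underlyingGraph (A : V → V → Prop) : SimpleGraph V where
  Adj u v := u ≠ v ∧ DAdj A u v
  symm := ⟨fun _ _ h => ⟨h.1.symm, h.2.symm⟩⟩
  loopless := ⟨fun _ h => h.1 rfl⟩

/-- The underlying graph of the digraph is a cycle. -/
def UnderlyingIsCycle (A : V → V → Prop) : Prop :=
  ∃ (n : ℕ) (x : ZMod n → V), 3 ≤ n ∧ Function.Bijective x ∧
    ∀ i j, DAdj A (x i) (x j) ↔ (j = i + 1 ∨ i = j + 1)

/-- A perfect graph: every induced subgraph has chromatic number equal to its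
clique number. -/
def GraphPerfect (G : SimpleGraph V) : Prop :=
  ∀ W : Set V, (G.induce W).chromaticNumber = ((G.induce W).cliqueNum : ℕ∞)

/-- A Hamilton directed path whose endpoints are `{s, t}` (in some order). -/
def HamiltonPathBetween (A : V → V → Prop) (s t : V) : Prop :=
  ∃ l : List V, IsDiPath A l ∧ (∀ v : V, v ∈ l) ∧
    ((l.head? = some s ∧ l.getLast? = some t) ∨
      (l.head? = some t ∧ l.getLast? = some s))

/-- A Hamilton directed path starting at `s` and ending at `t`. -/
def HamiltonPathFromTo (A : V → V → Prop) (s t : V) : Prop :=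
  ∃ l : List V, IsDiPath A l ∧ (∀ v : V, v ∈ l) ∧
    l.head? = some s ∧ l.getLast? = some t

/-- The exceptional strong semicomplete digraph on four vertices
(`a,b,c,d = 0,1,2,3`): the 4-cycle `a→d→c→b→a` together with digons `a↔c`, `b↔d`. -/
def BadFour : Fin 4 → Fin 4 → Prop := fun u v =>
  (u, v) ∈ ({(0,3), (3,2), (2,1), (1,0), (0,2), (2,0), (1,3), (3,1)} :
    Set (Fin 4 × Fin 4))

/-- A locally in-semicomplete digraph: any two in-neighbours of a vertex are adjacent. -/
def LocallyInSemicomplete (A : V → V → Prop) : Prop :=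
  ∀ v u w : V, A u v → A w v → u ≠ w → DAdj A u w

/-- A strong component: a maximal set of pairwise mutually reachable vertices. -/
def IsStrongComponent (A : V → V → Prop) (X : Set V) : Prop :=
  X.Nonempty ∧ (∀ u ∈ X, ∀ v ∈ X, MutReach A u v) ∧
    ∀ u v, v ∈ X → MutReach A u v → u ∈ X

/-- `C` is the vertex set of an induced cycle of `G`. -/
def InducedCycleSet (G : SimpleGraph V) (C : Set V) : Prop :=
  ∃ (n : ℕ) (x : ZMod n → V), 3 ≤ n ∧ Function.Injective x ∧ Set.range x = C ∧
    ∀ i j, G.Adj (x i) (x j) ↔ (j = i + 1 ∨ i = j + 1)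

/-- `G` contains a subdivision of `K₄`: four branch vertices joined by
pairwise internally disjoint paths. -/
def HasK4Subdivision (G : SimpleGraph V) : Prop :=
  ∃ (b : Fin 4 → V) (P : ∀ i j : Fin 4, G.Walk (b i) (b j)),
    Function.Injective b ∧
    (∀ i j, i ≠ j → (P i j).IsPath) ∧
    (∀ i j m, i ≠ j → b m ∈ (P i j).support → m = i ∨ m = j) ∧
    (∀ i j k l, i ≠ j → k ≠ l → ({i, j} : Finset (Fin 4)) ≠ {k, l} →
      ∀ v, v ∈ (P i j).support → v ∈ (P k l).support →
        (v = b i ∨ v = b j) ∧ (v = b k ∨ v = b l))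

/-- 2-connected: connected, at least 3 vertices, and no cut vertex. -/
def TwoConnected (G : SimpleGraph V) : Prop :=
  G.Connected ∧ 3 ≤ Nat.card V ∧
    ∀ v : V, (G.induce {u | u ≠ v}).Preconnected


/-! By the Gallai–Milgram theorem, a path cover whose set of terminal vertices is
inclusion-minimal admits a stable set of the same size. Given a maximum stable set `S` and a
relation `R` whose adjacencies include those of `A` and which realises every adjacency at `S` by
an arc into `S`, apply this to the arcs of `R` not leaving `S`: every vertex of `S` is then a
terminal, and since a stable set for these arcs is stable in `A`, counting forces the terminals
to be exactly `S`.

With at most two lonely arcs, either no lonely arc leaves `S` (take `R = A`), or none enters `S`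
(take the reverse of `A`), or the two lonely arcs are one leaving and one entering `S`. In the
last case take for `R` the digons together with all adjacencies into `S`: since the paths meet
`S` only at their ends, each of them is a directed path in one of its two directions. -/

theorem List.IsChain.getLast?_eq_of_forall_not_rel {R : V → V → Prop} {l : List V} {x : V}
    (hl : l.IsChain R) (hx : x ∈ l) (hsink : ∀ y, ¬ R x y) : l.getLast? = some x := by
  induction l with
  | nil => simp at hx
  | cons a l ih =>
    cases l with
    | nil => simp_all
    | cons b l =>
      rw [List.isChain_cons_cons] at hl
      rcases List.mem_cons.1 hx with rfl | hx
      · exact absurd hl.1 (hsink b)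
      · simpa using ih hl.2 hx

/-- Empty paths are allowed: they have no terminal vertex and are discarded in the end. -/
structure IsPathCover (R : V → V → Prop) (s : Set V) (P : List (List V)) : Prop where
  isChain : ∀ l ∈ P, l.IsChain R
  nodup : P.flatten.Nodup
  mem_flatten : ∀ v, v ∈ P.flatten ↔ v ∈ s

def terminals (P : List (List V)) : Set V := {t | ∃ l ∈ P, l.getLast? = some t}

@[simp]
theorem mem_terminals_cons {l : List V} {P : List (List V)} {t : V} :
    t ∈ terminals (l :: P) ↔ l.getLast? = some t ∨ t ∈ terminals P := by
  simp [terminals]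

theorem terminals_perm {P Q : List (List V)} (h : P.Perm Q) : terminals P = terminals Q := by
  ext t
  simp [terminals, h.mem_iff]

namespace IsPathCover

variable {R : V → V → Prop} {s : Set V} {P Q : List (List V)} {W l l₁ l₂ : List V} {t τ x : V}

theorem perm (hP : IsPathCover R s P) (h : P.Perm Q) : IsPathCover R s Q where
  isChain l hl := hP.isChain l (h.mem_iff.2 hl)
  nodup := (h.flatten).nodup_iff.1 hP.nodup
  mem_flatten v := (h.flatten.mem_iff).symm.trans (hP.mem_flatten v)

theorem nodup_of_mem (hP : IsPathCover R s P) (hl : l ∈ P) : l.Nodup :=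
  (List.nodup_flatten.1 hP.nodup).1 l hl

theorem eq_of_mem_of_mem (hP : IsPathCover R s P) (hl₁ : l₁ ∈ P) (hl₂ : l₂ ∈ P)
    (hx₁ : x ∈ l₁) (hx₂ : x ∈ l₂) : l₁ = l₂ := by
  by_contra hne
  have : Std.Symm (α := List V) List.Disjoint := ⟨fun _ _ h => h.symm⟩
  exact (List.nodup_flatten.1 hP.nodup).2.forall hl₁ hl₂ hne hx₁ hx₂

theorem terminals_subset (hP : IsPathCover R s P) : terminals P ⊆ s := by
  rintro t ⟨l, hl, hlt⟩
  exact (hP.mem_flatten t).1 (List.mem_flatten.2 ⟨l, hl, List.mem_of_getLast? hlt⟩)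

theorem getLast?_eq_of_mem_terminals (hP : IsPathCover R s P) (hl : l ∈ P) (hx : x ∈ l)
    (ht : x ∈ terminals P) : l.getLast? = some x := by
  obtain ⟨l', hl', hl'x⟩ := ht
  rwa [hP.eq_of_mem_of_mem hl hl' hx (List.mem_of_getLast? hl'x)]

theorem notMem_terminals_of_mem_head (hP : IsPathCover R s (l :: P)) (hx : x ∈ l) :
    x ∉ terminals P := by
  rintro ⟨l', hl', hl'x⟩
  have hnd := hP.nodup
  rw [List.flatten_cons] at hnd
  exact List.disjoint_of_nodup_append hnd hx
    (List.mem_flatten.2 ⟨l', hl', List.mem_of_getLast? hl'x⟩)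

theorem nil_cons (hP : IsPathCover R s P) : IsPathCover R s ([] :: P) where
  isChain l hl := (List.mem_cons.1 hl).elim (fun h => h ▸ List.IsChain.nil) (hP.isChain l)
  nodup := by simpa using hP.nodup
  mem_flatten v := by simpa using hP.mem_flatten v

theorem concat_cons (hP : IsPathCover R s (W :: P)) (ht : t ∉ s)
    (hR : ∀ w ∈ W.getLast?, R w t) : IsPathCover R (insert t s) ((W ++ [t]) :: P) where
  isChain l hl := by
    rcases List.mem_cons.1 hl with rfl | hl
    · exact (hP.isChain W (by simp)).append (List.IsChain.singleton t) (by simpa using hR)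
    · exact hP.isChain l (by simp [hl])
  nodup := by
    have htW : t ∉ (W :: P).flatten := fun h => ht ((hP.mem_flatten t).1 h)
    simpa [List.nodup_middle] using List.nodup_cons.2 ⟨htW, hP.nodup⟩
  mem_flatten v := by
    have := hP.mem_flatten v
    simp only [List.flatten_cons, List.mem_append, List.mem_singleton, Set.mem_insert_iff] at this ⊢
    tauto

theorem of_concat_cons (hP : IsPathCover R s ((W ++ [t]) :: P)) :
    IsPathCover R (s \ {t}) (W :: P) := by
  have hnd := hP.nodup
  simp only [List.flatten_cons, List.append_assoc, List.singleton_append, List.nodup_middle,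
    List.nodup_cons, List.mem_append] at hnd
  refine ⟨fun l hl => ?_, by simpa using hnd.2, fun v => ?_⟩
  · rcases List.mem_cons.1 hl with rfl | hl
    · exact (List.isChain_append.1 (hP.isChain _ List.mem_cons_self)).1
    · exact hP.isChain l (List.mem_cons_of_mem _ hl)
  · have hmem := hP.mem_flatten v
    simp only [List.flatten_cons, List.append_assoc, List.singleton_append, List.mem_append,
      List.mem_cons, Set.mem_sdiff, Set.mem_singleton_iff] at hmem ⊢
    grind

theorem exists_insert (hP : IsPathCover R s P) (ht : t ∉ s) (hτ : τ ∈ terminals P → R τ t) :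
    ∃ Q, IsPathCover R (insert t s) Q ∧ terminals Q ⊆ insert t (terminals P \ {τ}) := by
  classical
  by_cases hτP : τ ∈ terminals P
  · obtain ⟨U, hU, hUτ⟩ := hτP
    have hperm := List.perm_cons_erase hU
    have hP' := hP.perm hperm
    refine ⟨(U ++ [t]) :: P.erase U, hP'.concat_cons ht (by simpa [hUτ] using hτ ⟨U, hU, hUτ⟩),
      fun x hx => ?_⟩
    rcases mem_terminals_cons.1 hx with hx | hx
    · simp_all
    · have hxτ : x ≠ τ := by
        rintro rfl
        exact hP'.notMem_terminals_of_mem_head (List.mem_of_getLast? hUτ) hx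
      exact Or.inr ⟨(terminals_perm hperm).symm ▸ mem_terminals_cons.2 (Or.inr hx), hxτ⟩
  · refine ⟨([] ++ [t]) :: P, hP.nil_cons.concat_cons ht (by simp), fun x hx => ?_⟩
    rcases mem_terminals_cons.1 hx with hx | hx
    · simp_all
    · exact Or.inr ⟨hx, by rintro rfl; exact hτP hx⟩

end IsPathCover

def IsMinimalPathCover (R : V → V → Prop) (s : Set V) (P : List (List V)) : Prop :=
  IsPathCover R s P ∧
    ∀ Q, IsPathCover R s Q → terminals Q ⊆ terminals P → terminals P ⊆ terminals Q

namespace IsMinimalPathCover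

variable {R : V → V → Prop} {s : Set V} {P Q : List (List V)} {W : List V} {t t₂ : V}

theorem perm (hP : IsMinimalPathCover R s P) (h : P.Perm Q) : IsMinimalPathCover R s Q := by
  rw [IsMinimalPathCover, ← terminals_perm h]
  exact ⟨hP.1.perm h, hP.2⟩

/-- The Gallai–Milgram step, for an arc `t₂ → t` between two terminals: a cover of `s \ {t}`
with fewer terminals would extend, through `t₂` or through the predecessor of `t`, to a cover
of `s` with fewer terminals. -/
theorem terminals_eq_of_subset (hP : IsMinimalPathCover R s ((W ++ [t]) :: P))
    (ht₂ : t₂ ∈ terminals P) (hR : R t₂ t) (hQ : IsPathCover R (s \ {t}) Q)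
    (hQW : terminals Q ⊆ terminals (W :: P)) :
    W ≠ [] ∧ terminals Q = terminals (W :: P) := by
  have hts : t ∈ s := (hP.1.mem_flatten t).1 (by simp)
  have hins : insert t (s \ {t}) = s := by simp [hts]
  have htP : t ∉ terminals P := hP.1.notMem_terminals_of_mem_head (by simp)
  have hnot : t ∉ s \ {t} := by simp
  obtain ⟨w, hw, hwQ⟩ : ∃ w, W.getLast? = some w ∧ w ∈ terminals Q := by
    by_contra! hno
    have hQP : terminals Q ⊆ terminals P := fun x hx =>
      (mem_terminals_cons.1 (hQW hx)).resolve_left fun h => hno x h hx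
    obtain ⟨Q', hQ', hQ'sub⟩ := hQ.exists_insert hnot (fun _ => hR)
    rw [hins] at hQ'
    have key := hP.2 Q' hQ' fun x hx => by
      have := hQ'sub hx
      grind [mem_terminals_cons]
    have := hQ'sub (key (mem_terminals_cons.2 (Or.inr ht₂)))
    grind
  have hwt : R w t := by
    obtain ⟨W', rfl⟩ := List.getLast?_eq_some_iff.1 hw
    exact (by simpa using hP.1.isChain _ List.mem_cons_self : (W' ++ [w]).IsChain R ∧ R w t).2
  obtain ⟨Q', hQ', hQ'sub⟩ := hQ.exists_insert (τ := w) hnot (fun _ => hwt)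
  rw [hins] at hQ'
  have key := hP.2 Q' hQ' fun x hx => by
    have := hQ'sub hx
    grind [mem_terminals_cons]
  refine ⟨by rintro rfl; simp at hw, hQW.antisymm fun x hx => ?_⟩
  rcases mem_terminals_cons.1 hx with hx | hx
  · rwa [← Option.some_inj.1 (hw.symm.trans hx)]
  · have := hQ'sub (key (mem_terminals_cons.2 (Or.inr hx)))
    grind

theorem of_concat_cons [Finite V] (hP : IsMinimalPathCover R s ((W ++ [t]) :: P))
    (ht₂ : t₂ ∈ terminals P) (hR : R t₂ t) :
    IsMinimalPathCover R (s \ {t}) (W :: P) ∧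
      (terminals (W :: P)).ncard = (terminals ((W ++ [t]) :: P)).ncard := by
  have hP' := hP.1.of_concat_cons
  obtain ⟨hW, -⟩ := hP.terminals_eq_of_subset ht₂ hR hP' subset_rfl
  refine ⟨⟨hP', fun Q hQ hsub => (hP.terminals_eq_of_subset ht₂ hR hQ hsub).2.symm.subset⟩, ?_⟩
  obtain ⟨W', w, rfl⟩ := List.eq_nil_or_concat' W |>.resolve_left hW
  have hw : w ∉ terminals P := hP'.notMem_terminals_of_mem_head (by simp)
  have ht : t ∉ terminals P := hP.1.notMem_terminals_of_mem_head (by simp)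
  have h1 : terminals ((W' ++ [w]) :: P) = insert w (terminals P) := by ext; simp [eq_comm]
  have h2 : terminals ((W' ++ [w] ++ [t]) :: P) = insert t (terminals P) := by ext; simp [eq_comm]
  rw [h1, h2, Set.ncard_insert_of_notMem hw, Set.ncard_insert_of_notMem ht]

theorem exists_isStable [Finite V] (hP : IsMinimalPathCover R s P) :
    ∃ I ⊆ s, IsStable R I ∧ I.ncard = (terminals P).ncard := by
  classical
  induction hn : s.ncard using Nat.strong_induction_on generalizing s P with
  | _ n ih =>
  by_cases hst : IsStable R (terminals P)
  · exact ⟨_, hP.1.terminals_subset, hst, rfl⟩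
  obtain ⟨t, ⟨W₁, hW₁, hW₁t⟩, t₂, ht₂, hne, hR⟩ :
      ∃ t ∈ terminals P, ∃ t₂ ∈ terminals P, t ≠ t₂ ∧ R t₂ t := by
    simp only [IsStable, DAdj, not_forall, not_not] at hst
    obtain ⟨u, hu, v, hv, huv, h | h⟩ := hst
    exacts [⟨v, hv, u, hu, huv.symm, h⟩, ⟨u, hu, v, hv, huv, h⟩]
  obtain ⟨W, rfl⟩ := List.getLast?_eq_some_iff.1 hW₁t
  have hperm := List.perm_cons_erase hW₁
  rw [terminals_perm hperm] at ht₂ ⊢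
  have ht₂' : t₂ ∈ terminals (P.erase (W ++ [t])) :=
    (by simpa using ht₂ : t = t₂ ∨ _).resolve_left hne
  obtain ⟨hmin, hcard⟩ := (hP.perm hperm).of_concat_cons ht₂' hR
  have hlt : (s \ {t}).ncard < n :=
    hn ▸ Set.ncard_sdiff_singleton_lt_of_mem ((hP.1.mem_flatten t).1
      (List.mem_flatten.2 ⟨_, hW₁, by simp⟩))
  obtain ⟨I, hIs, hI, hIcard⟩ := ih _ hlt hmin rfl
  exact ⟨I, hIs.trans Set.sdiff_subset, hI, hIcard.trans hcard⟩

end IsMinimalPathCover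

theorem exists_isMinimalPathCover [Finite V] (R : V → V → Prop) (s : Set V) :
    ∃ P, IsMinimalPathCover R s P := by
  have hcover : ∃ P, IsPathCover R s P := by
    induction s, s.toFinite using Set.Finite.induction_on with
    | empty => exact ⟨[], ⟨by simp, by simp, by simp⟩⟩
    | @insert t s ht _ ih =>
      obtain ⟨P, hP⟩ := ih
      obtain ⟨Q, hQ, -⟩ := hP.exists_insert (τ := t) ht
        (fun h => absurd (hP.terminals_subset h) ht)
      exact ⟨Q, hQ⟩
  obtain ⟨T, ⟨P, hP, rfl⟩, hmin⟩ := exists_minimal_of_wellFoundedLT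
    (fun T => ∃ P, IsPathCover R s P ∧ terminals P = T) (hcover.elim fun P hP => ⟨_, P, hP, rfl⟩)
  exact ⟨P, hP, fun Q hQ hsub => hmin ⟨Q, hQ, rfl⟩ hsub⟩

theorem exists_isPathCover_isStable [Finite V] (R : V → V → Prop) (s : Set V) :
    ∃ P, IsPathCover R s P ∧ ∃ I ⊆ s, IsStable R I ∧ I.ncard = (terminals P).ncard := by
  obtain ⟨P, hP⟩ := exists_isMinimalPathCover R s
  exact ⟨P, hP.1, hP.exists_isStable⟩

theorem IsMaxStable.exists_isPathCover_terminals_eq [Finite V] {A R : V → V → Prop}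
    {S : Set V} (hS : IsMaxStable A S) (hR : ∀ u v, DAdj A u v → DAdj R u v)
    (hin : ∀ σ ∈ S, ∀ v, DAdj A σ v → R v σ) :
    ∃ P, IsPathCover R Set.univ P ∧ terminals P = S := by
  obtain ⟨P, hP, I, -, hI, hIcard⟩ :=
    exists_isPathCover_isStable (fun u v => R u v ∧ u ∉ S) Set.univ
  have hIA : IsStable A I := by
    intro u hu v hv huv hadj
    refine hI u hu v hv huv ?_
    by_cases huS : u ∈ S <;> by_cases hvS : v ∈ S
    · exact absurd hadj (hS.1 u huS v hvS huv)
    · exact Or.inr ⟨hin u huS v hadj, hvS⟩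
    · exact Or.inl ⟨hin v hvS u hadj.symm, huS⟩
    · exact (hR u v hadj).imp (⟨·, huS⟩) (⟨·, hvS⟩)
  have hSP : S ⊆ terminals P := fun σ hσ => by
    obtain ⟨l, hl, hσl⟩ := List.mem_flatten.1 ((hP.mem_flatten σ).2 trivial)
    exact ⟨l, hl, (hP.isChain l hl).getLast?_eq_of_forall_not_rel hσl fun _ h => h.2 hσ⟩
  refine ⟨P, ⟨fun l hl => (hP.isChain l hl).imp fun _ _ h => h.1, hP.nodup, hP.mem_flatten⟩,
    (Set.eq_of_subset_of_ncard_le hSP ?_ (Set.toFinite _)).symm⟩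
  exact hIcard ▸ hS.2 I hIA

theorem IsPathCover.exists_isBEPartition {A R : V → V → Prop} {S : Set V} {P : List (List V)}
    (hP : IsPathCover R Set.univ P) (hPS : terminals P = S)
    (horient : ∀ l ∈ P, l.IsChain A ∨ l.reverse.IsChain A) : ∃ Q, IsBEPartition A S Q := by
  classical
  set orient : List V → List V := fun l => if l.IsChain A then l else l.reverse
  have mem_orient (l : List V) (x : V) : x ∈ orient l ↔ x ∈ l := by
    by_cases h : l.IsChain A <;> simp [orient, h]
  have endpoint {l : List V} {x : V} (h : l.getLast? = some x) :
      (orient l).head? = some x ∨ (orient l).getLast? = some x := by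
    by_cases hc : l.IsChain A <;> simp [orient, hc, h]
  have hlast {l : List V} {x : V} (hl : l ∈ P) (hx : x ∈ l) (hxS : x ∈ S) :
      l.getLast? = some x :=
    hP.getLast?_eq_of_mem_terminals hl hx (hPS ▸ hxS)
  refine ⟨orient '' {l | l ∈ P ∧ l ≠ []}, ⟨⟨⟨?_, ?_⟩, ?_⟩, ?_⟩⟩
  · rintro _ ⟨l, ⟨hl, hne⟩, rfl⟩
    refine ⟨by by_cases hc : l.IsChain A <;> simp [orient, hc, hne], ?_, ?_⟩
    · by_cases hc : l.IsChain A <;> simp [orient, hc, hP.nodup_of_mem hl]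
    · by_cases hc : l.IsChain A
      · simp only [orient, hc, if_true]
        exact hc
      · simp only [orient, hc, if_false]
        exact (horient l hl).resolve_left hc
  · intro v
    obtain ⟨l, hl, hvl⟩ := List.mem_flatten.1 ((hP.mem_flatten v).2 trivial)
    refine ⟨orient l, ⟨⟨l, ⟨hl, List.ne_nil_of_mem hvl⟩, rfl⟩, (mem_orient l v).2 hvl⟩, ?_⟩
    rintro _ ⟨⟨l', ⟨hl', -⟩, rfl⟩, hvl'⟩
    rw [hP.eq_of_mem_of_mem hl' hl ((mem_orient l' v).1 hvl') hvl]
  · rintro _ ⟨l, ⟨hl, hne⟩, rfl⟩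
    obtain ⟨σ, hσ⟩ := Option.ne_none_iff_exists'.1 (List.getLast?_eq_none_iff.not.2 hne)
    refine ⟨σ, ⟨(mem_orient l σ).2 (List.mem_of_getLast? hσ), hPS ▸ ⟨l, hl, hσ⟩⟩, ?_⟩
    rintro x ⟨hx, hxS⟩
    exact Option.some_inj.1 ((hlast hl ((mem_orient l x).1 hx) hxS).symm.trans hσ)
  · rintro _ ⟨l, ⟨hl, -⟩, rfl⟩ x hx hxS
    exact endpoint (hlast hl ((mem_orient l x).1 hx) hxS)

theorem IsMaxStable.exists_isBEPartition [Finite V] {A R : V → V → Prop} {S : Set V}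
    (hS : IsMaxStable A S) (hR : ∀ u v, DAdj A u v → DAdj R u v)
    (hin : ∀ σ ∈ S, ∀ v, DAdj A σ v → R v σ)
    (horient : ∀ l : List V, l.IsChain R → l.Nodup → (∀ x ∈ l, x ∈ S → l.getLast? = some x) →
      l.IsChain A ∨ l.reverse.IsChain A) :
    ∃ P, IsBEPartition A S P := by
  obtain ⟨P, hP, hPS⟩ := hS.exists_isPathCover_terminals_eq hR hin
  exact hP.exists_isBEPartition hPS fun l hl => horient l (hP.isChain l hl) (hP.nodup_of_mem hl)
    fun x hx hxS => hP.getLast?_eq_of_mem_terminals hl hx (hPS ▸ hxS)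

theorem isChain_or_isChain_reverse {A : V → V → Prop} {S : Set V} {l : List V}
    (hl : l.IsChain fun u v => (A u v ∧ A v u) ∨ (v ∈ S ∧ DAdj A u v)) (hnd : l.Nodup)
    (hlast : ∀ x ∈ l, x ∈ S → l.getLast? = some x) : l.IsChain A ∨ l.reverse.IsChain A := by
  obtain rfl | ⟨m, σ, rfl⟩ := List.eq_nil_or_concat' l
  · simp
  have hmS : ∀ x ∈ m, x ∉ S := fun x hx hxS => by
    have hxσ : x = σ := by simpa [eq_comm] using hlast x (by simp [hx]) hxS
    exact (List.nodup_append.1 hnd).2.2 x hx σ (by simp) hxσ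
  obtain ⟨hm, -, hmσ⟩ := List.isChain_append.1 hl
  have hdigon : m.IsChain fun u v => A u v ∧ A v u :=
    hm.imp_of_mem_imp fun _ v _ hv h => h.resolve_right fun h' => hmS v hv h'.1
  cases hmx : m.getLast? with
  | none => simp_all
  | some x =>
    have hxσ : DAdj A x σ := by
      rcases hmσ x hmx σ rfl with h | h
      exacts [Or.inl h.1, h.2]
    rcases hxσ with h | h
    · exact Or.inl ((hdigon.imp fun _ _ h => h.1).append (List.IsChain.singleton σ)
        (by simpa [hmx] using h))
    · refine Or.inr ?_
      rw [List.reverse_append, List.reverse_singleton]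
      exact (List.IsChain.singleton σ).append
        (List.isChain_reverse.2 (hdigon.imp fun _ _ h => h.2)) (by simpa [hmx] using h)

def lonelyArcs (A : V → V → Prop) : Set (V × V) := {p | A p.1 p.2 ∧ ¬ A p.2 p.1}

namespace IsMaxStable

variable [Finite V] {A : V → V → Prop} {S : Set V}

theorem exists_isBEPartition_of_lonely_not_from (hS : IsMaxStable A S)
    (h : ∀ p ∈ lonelyArcs A, p.1 ∉ S) : ∃ P, IsBEPartition A S P :=
  hS.exists_isBEPartition (R := A) (fun _ _ => id)
    (fun σ hσ v hadj => hadj.elim (fun hA => by_contra fun hnA => h (σ, v) ⟨hA, hnA⟩ hσ) id)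
    fun _ hl _ _ => Or.inl hl

theorem exists_isBEPartition_of_lonely_not_into (hS : IsMaxStable A S)
    (h : ∀ p ∈ lonelyArcs A, p.2 ∉ S) : ∃ P, IsBEPartition A S P :=
  hS.exists_isBEPartition (R := fun u v => A v u) (fun _ _ => Or.symm)
    (fun σ hσ v hadj => hadj.elim id fun hA => by_contra fun hnA => h (v, σ) ⟨hA, hnA⟩ hσ)
    fun _ hl _ _ => Or.inr (List.isChain_reverse.2 hl)

theorem exists_isBEPartition_of_lonely_meet (hS : IsMaxStable A S)
    (h : ∀ p ∈ lonelyArcs A, p.1 ∈ S ∨ p.2 ∈ S) : ∃ P, IsBEPartition A S P := by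
  refine hS.exists_isBEPartition
    (R := fun u v => (A u v ∧ A v u) ∨ (v ∈ S ∧ DAdj A u v)) (fun u v hadj => ?_)
    (fun σ hσ v hadj => Or.inr ⟨hσ, hadj.symm⟩)
    fun _ hl hnd hlast => isChain_or_isChain_reverse hl hnd hlast
  by_cases hv : v ∈ S
  · exact Or.inl (Or.inr ⟨hv, hadj⟩)
  by_cases hu : u ∈ S
  · exact Or.inr (Or.inr ⟨hu, hadj.symm⟩)
  refine Or.inl (Or.inl ?_)
  rcases hadj with hA | hA
  · exact ⟨hA, by_contra fun hnA => (h (u, v) ⟨hA, hnA⟩).elim hu hv⟩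
  · exact ⟨by_contra fun hnA => (h (v, u) ⟨hA, hnA⟩).elim hv hu, hA⟩

end IsMaxStable

theorem beProperty_of_ncard_lonelyArcs_le_two [Finite V] {A : V → V → Prop}
    (h : (lonelyArcs A).ncard ≤ 2) : BEProperty A := by
  intro S hS
  by_cases hfrom : ∀ p ∈ lonelyArcs A, p.1 ∉ S
  · exact hS.exists_isBEPartition_of_lonely_not_from hfrom
  by_cases hinto : ∀ p ∈ lonelyArcs A, p.2 ∉ S
  · exact hS.exists_isBEPartition_of_lonely_not_into hinto
  push Not at hfrom hinto
  obtain ⟨p, hp, hpS⟩ := hfrom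
  obtain ⟨q, hq, hqS⟩ := hinto
  have hp2 : p.2 ∉ S := fun hp2 =>
    hS.1 _ hpS _ hp2 (fun heq => hp.2 (heq ▸ hp.1)) (Or.inl hp.1)
  have hpq : p ≠ q := by rintro rfl; exact hp2 hqS
  have hlonely : lonelyArcs A = {p, q} :=
    (Set.eq_of_subset_of_ncard_le (Set.insert_subset hp (Set.singleton_subset_iff.2 hq))
      (by rwa [Set.ncard_pair hpq]) (Set.toFinite _)).symm
  refine hS.exists_isBEPartition_of_lonely_meet fun r hr => ?_
  rcases (hlonely ▸ hr : r ∈ ({p, q} : Set (V × V))) with rfl | rfl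
  exacts [Or.inl hpS, Or.inr hqS]

theorem ncard_lonelyArcs_induce_le [Finite V] (A : V → V → Prop) (W : Set V) :
    (lonelyArcs fun a b : W => A a b).ncard ≤ (lonelyArcs A).ncard :=
  Set.ncard_le_ncard_of_injOn (fun p => (p.1.1, p.2.1)) (fun _ hp => hp)
    (fun _ _ _ _ h => Prod.ext (Subtype.ext (congrArg Prod.fst h))
      (Subtype.ext (congrArg Prod.snd h)))

theorem BEDiperfect.alphaDiperfect {A : V → V → Prop} (h : BEDiperfect A) :
    AlphaDiperfect A := fun W S hS => (h W S hS).imp fun _ hP => hP.1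

theorem two_semi_symmetric_BEDiperfect_general {V : Type*} [Finite V] (A : V → V → Prop)
    (h : {p : V × V | A p.1 p.2 ∧ ¬ A p.2 p.1}.ncard ≤ 2) :
    BEDiperfect A ∧ AlphaDiperfect A := by
  have hBE : BEDiperfect A := fun W =>
    beProperty_of_ncard_lonelyArcs_le_two ((ncard_lonelyArcs_induce_le A W).trans h)
  exact ⟨hBE, hBE.alphaDiperfect⟩

/-- Every digraph with at most two lonely arcs is BE-diperfect (in particular every
symmetric digraph is), and hence α-diperfect. -/
theorem two_semi_symmetric_BEDiperfect {V : Type*} [Finite V] (A : V → V → Prop)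
    (hirr : ∀ v, ¬ A v v)
    (h : {p : V × V | A p.1 p.2 ∧ ¬ A p.2 p.1}.ncard ≤ 2) :
    BEDiperfect A ∧ AlphaDiperfect A :=
  two_semi_symmetric_BEDiperfect_general A h
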